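/- arXiv:2402.16926 — 2 statements merged into one kernel-verified Lean document; each statement's English description precedes it below -/
import Mathlib

section
/- Let X be finite, γ ∈ (0,1], β ∈ [0,1), N ∈ ℕ, and let P = {(P₀, P_b) : TV(P₀, P_b) ≥ 1-β}. If α > 2|X| · exp(-2Nγ²(1-β)² / |X|²), then the detector g(D, P₀) = 1{TV(P₀, S_N) ≥ γ(1-β)/2}, where S_N is the empirical distribution of D, satisfies: for every (P₀, P_b) ∈ P, ½ Pr_{D~P₁^N}{g(D,P₀)=0} + ½ Pr_{D~P₀^N}{g(D,P₀)=1} ≤ α, where P₁ = γP_b + (1-γ)P₀. -/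
open MeasureTheory

/-- Empirical distribution (type) of a dataset of N samples. -/
noncomputable def empDist {X : Type*} [Fintype X] [DecidableEq X] {N : ℕ}
    (D : Fin N → X) (x : X) : ℝ :=
  (Finset.univ.filter fun n => D n = x).card / N

/-- Total variation distance between two probability vectors on a finite alphabet. -/
noncomputable def tvFin {X : Type*} [Fintype X] (f g : X → ℝ) : ℝ :=
  (∑ x, |f x - g x|) / 2

/-- Total variation distance between two PMFs on a finite alphabet. -/
noncomputable def tvPMF {X : Type*} [Fintype X] (P Q : PMF X) : ℝ :=
  tvFin (fun x => (P x).toReal) (fun x => (Q x).toReal)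

/-! Under `P₀` the detector fires only if the type `S_N` is `γ(1-β)/2`-far from `P₀`. Under `P₁`
it stays silent only if `S_N` is that close to `P₀`, hence, since
`TV(P₀, P₁) = γ TV(P₀, P_b) ≥ γ(1-β)`, `γ(1-β)/2`-far from `P₁` by the triangle inequality. Both
events are rare by concentration of the type: if `TV(P, S_N) ≥ t`, some coordinate deviates by
at least `2t/|X|`, and Hoeffding's inequality for the i.i.d. indicators `1{X_n = x}` bounds the
probability of each such deviation by `2 exp(-2N(2t/|X|)²)`. -/

open ProbabilityTheory

lemma ProbabilityTheory.HasSubgaussianMGF.measureReal_abs_ge_le {Ω : Type*}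
    {mΩ : MeasurableSpace Ω} {μ : Measure Ω} [IsFiniteMeasure μ] {Y : Ω → ℝ} {c : NNReal}
    (h : HasSubgaussianMGF Y c μ) {ε : ℝ} (hε : 0 ≤ ε) :
    μ.real {ω | ε ≤ |Y ω|} ≤ 2 * Real.exp (-ε ^ 2 / (2 * c)) := by
  have hsub : {ω | ε ≤ |Y ω|} ⊆ {ω | ε ≤ Y ω} ∪ {ω | ε ≤ (-Y) ω} := fun ω hω ↦ by
    rcases le_abs'.mp (show ε ≤ |Y ω| from hω) with h | h
    · exact Or.inr (by simp only [Set.mem_ofPred_eq, Pi.neg_apply]; linarith)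
    · exact Or.inl h
  calc μ.real {ω | ε ≤ |Y ω|}
      ≤ μ.real {ω | ε ≤ Y ω} + μ.real {ω | ε ≤ (-Y) ω} :=
        (measureReal_mono hsub).trans (measureReal_union_le _ _)
    _ ≤ 2 * Real.exp (-ε ^ 2 / (2 * c)) := by
        linarith [h.measure_ge_le hε, h.neg.measure_ge_le hε]

lemma hasSubgaussianMGF_pi_sum_sub_integral {ι Ω : Type*} [Fintype ι] {mΩ : MeasurableSpace Ω}
    {μ : Measure Ω} [IsProbabilityMeasure μ] {f : Ω → ℝ} (hf : Measurable f) {a b : ℝ}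
    (hab : ∀ ω, f ω ∈ Set.Icc a b) :
    HasSubgaussianMGF (fun ω : ι → Ω ↦ ∑ i, (f (ω i) - μ[f]))
      (Fintype.card ι * ((‖b - a‖₊ / 2) ^ 2)) (Measure.pi fun _ ↦ μ) := by
  have hind : iIndepFun (fun i (ω : ι → Ω) ↦ f (ω i) - μ[f]) (Measure.pi fun _ ↦ μ) :=
    iIndepFun_pi (X := fun _ y ↦ f y - μ[f]) fun _ ↦ (hf.sub_const _).aemeasurable
  have hcoord (i : ι) : HasSubgaussianMGF (fun ω : ι → Ω ↦ f (ω i) - μ[f])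
      ((‖b - a‖₊ / 2) ^ 2) (Measure.pi fun _ ↦ μ) := by
    have h := hasSubgaussianMGF_of_mem_Icc (μ := Measure.pi fun _ ↦ μ)
      (X := fun ω : ι → Ω ↦ f (ω i)) (hf.comp (measurable_pi_apply i)).aemeasurable
      (ae_of_all _ fun ω ↦ hab (ω i))
    rwa [integral_comp_eval hf.aestronglyMeasurable] at h
  simpa using HasSubgaussianMGF.sum_of_iIndepFun hind (s := Finset.univ) fun i _ ↦ hcoord i

lemma sum_sub_eq_mul_empDist_sub {X : Type*} [Fintype X] [DecidableEq X] {N : ℕ} (hN : 0 < N)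
    (D : Fin N → X) (x : X) (p : ℝ) :
    ∑ n, ((if D n = x then (1 : ℝ) else 0) - p) = N * (empDist D x - p) := by
  have : (N : ℝ) ≠ 0 := by positivity
  rw [Finset.sum_sub_distrib, Finset.sum_boole, empDist]
  simp only [Finset.sum_const, Finset.card_univ, Fintype.card_fin, nsmul_eq_mul]
  field_simp

lemma measureReal_abs_empDist_sub_ge_le {X : Type*} [Fintype X] [DecidableEq X]
    [MeasurableSpace X] [MeasurableSingletonClass X] (N : ℕ) (P : PMF X) (x : X) {s : ℝ}
    (hs : 0 ≤ s) :
    (Measure.pi fun _ : Fin N ↦ P.toMeasure).real {D | s ≤ |empDist D x - (P x).toReal|}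
      ≤ 2 * Real.exp (-(2 * N * s ^ 2)) := by
  rcases N.eq_zero_or_pos with rfl | hN
  · simpa using
      (measureReal_le_one (μ := Measure.pi fun _ : Fin 0 ↦ P.toMeasure)).trans one_le_two
  set f : X → ℝ := fun y ↦ if y = x then 1 else 0
  have hmean : P.toMeasure[f] = (P x).toReal := by
    simp [f, PMF.integral_eq_sum]
  have h := (hasSubgaussianMGF_pi_sum_sub_integral (ι := Fin N) (μ := P.toMeasure) (f := f)
    (a := 0) (b := 1) (.of_discrete) (fun y ↦ by by_cases hy : y = x <;> simp [f, hy]))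
    |>.measureReal_abs_ge_le (ε := N * s) (by positivity)
  have hset : {D : Fin N → X | s ≤ |empDist D x - (P x).toReal|}
      = {D | N * s ≤ |∑ n, (f (D n) - P.toMeasure[f])|} := by
    ext D
    simp only [Set.mem_ofPred_eq, hmean, f, sum_sub_eq_mul_empDist_sub hN, abs_mul, Nat.abs_cast]
    exact (mul_le_mul_iff_right₀ (by positivity)).symm
  rw [hset]
  convert h using 3
  simp only [Fintype.card_fin, sub_zero, nnnorm_one]
  push_cast
  field_simp

lemma tvFin_comm {X : Type*} [Fintype X] (f g : X → ℝ) : tvFin f g = tvFin g f := by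
  simp only [tvFin, abs_sub_comm]

lemma tvFin_triangle {X : Type*} [Fintype X] (f g h : X → ℝ) :
    tvFin f h ≤ tvFin f g + tvFin g h := by
  simp only [tvFin, ← add_div, ← Finset.sum_add_distrib]
  gcongr with x
  exact abs_sub_le _ _ _

lemma tvFin_mix {X : Type*} [Fintype X] (f g : X → ℝ) {γ : ℝ} (hγ : 0 ≤ γ) :
    tvFin f (fun x ↦ γ * g x + (1 - γ) * f x) = γ * tvFin f g := by
  simp only [tvFin, Finset.mul_sum, mul_div_assoc']
  congr 1
  refine Finset.sum_congr rfl fun x _ ↦ ?_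
  rw [show f x - (γ * g x + (1 - γ) * f x) = γ * (f x - g x) by ring, abs_mul, abs_of_nonneg hγ]

lemma exists_le_abs_sub_of_le_tvFin {X : Type*} [Fintype X] [Nonempty X] {f g : X → ℝ} {t : ℝ}
    (h : t ≤ tvFin f g) : ∃ x, 2 * t / Fintype.card X ≤ |g x - f x| := by
  have hsum : ∑ _x : X, 2 * t / Fintype.card X ≤ ∑ x, |g x - f x| := by
    simp only [Finset.sum_const, Finset.card_univ, nsmul_eq_mul]
    simp only [tvFin, abs_sub_comm (f _)] at h
    field_simp
    linarith
  obtain ⟨x, -, hx⟩ := Finset.exists_le_of_sum_le Finset.univ_nonempty hsum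
  exact ⟨x, hx⟩

lemma measureReal_tvFin_empDist_ge_le {X : Type*} [Fintype X] [DecidableEq X]
    [MeasurableSpace X] [MeasurableSingletonClass X] (N : ℕ) (P : PMF X) {t : ℝ} (ht : 0 ≤ t) :
    (Measure.pi fun _ : Fin N ↦ P.toMeasure).real
        {D | t ≤ tvFin (fun x ↦ (P x).toReal) (empDist D)}
      ≤ 2 * Fintype.card X * Real.exp (-(8 * N * t ^ 2) / (Fintype.card X : ℝ) ^ 2) := by
  have : Nonempty X := P.support_nonempty.to_type
  have hK : (0 : ℝ) < Fintype.card X := by exact_mod_cast Fintype.card_pos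
  set s : ℝ := 2 * t / Fintype.card X
  have hsub : {D : Fin N → X | t ≤ tvFin (fun x ↦ (P x).toReal) (empDist D)}
      ⊆ ⋃ x, {D | s ≤ |empDist D x - (P x).toReal|} := fun D hD ↦
    Set.mem_iUnion.mpr (exists_le_abs_sub_of_le_tvFin hD)
  calc _ ≤ ∑ x : X, (Measure.pi fun _ : Fin N ↦ P.toMeasure).real
          {D | s ≤ |empDist D x - (P x).toReal|} :=
        (measureReal_mono hsub).trans (measureReal_iUnion_fintype_le _)
    _ ≤ ∑ _x : X, 2 * Real.exp (-(2 * N * s ^ 2)) :=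
        Finset.sum_le_sum fun x _ ↦ measureReal_abs_empDist_sub_ge_le N P x (by positivity)
    _ = _ := by
        have hexp : -(2 * N * s ^ 2) = -(8 * N * t ^ 2) / (Fintype.card X : ℝ) ^ 2 := by
          simp only [s]
          field_simp
          ring
        rw [Finset.sum_const, Finset.card_univ, nsmul_eq_mul, hexp]
        ring

lemma tvPMF_eq_mul_of_mix {X : Type*} [Fintype X] {P₀ Pb P₁ : PMF X} {γ : ℝ} (hγ0 : 0 ≤ γ)
    (hγ1 : γ ≤ 1) (hmix : ∀ x, P₁ x = ENNReal.ofReal γ * Pb x + ENNReal.ofReal (1 - γ) * P₀ x) :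
    tvPMF P₀ P₁ = γ * tvPMF P₀ Pb := by
  have hreal :
      (fun x ↦ (P₁ x).toReal) = fun x ↦ γ * (Pb x).toReal + (1 - γ) * (P₀ x).toReal := by
    ext x
    rw [hmix, ENNReal.toReal_add (ENNReal.mul_ne_top ENNReal.ofReal_ne_top (Pb.apply_ne_top x))
      (ENNReal.mul_ne_top ENNReal.ofReal_ne_top (P₀.apply_ne_top x)), ENNReal.toReal_mul,
      ENNReal.toReal_mul, ENNReal.toReal_ofReal hγ0, ENNReal.toReal_ofReal (by linarith)]
  rw [tvPMF, hreal, tvFin_mix _ _ hγ0, tvPMF]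

theorem stmt9_general {X : Type*} [Fintype X] [DecidableEq X] [MeasurableSpace X]
    [MeasurableSingletonClass X]
    (N : ℕ) (γ β α : ℝ) (hγ0 : 0 < γ) (hγ1 : γ ≤ 1) (hβ1 : β < 1)
    (hα : 2 * Fintype.card X * Real.exp (-(2 * N * γ ^ 2 * (1 - β) ^ 2) / (Fintype.card X : ℝ) ^ 2)
        < α) :
    ∀ P₀ Pb P₁ : PMF X,
      (∀ x, P₁ x = ENNReal.ofReal γ * Pb x + ENNReal.ofReal (1 - γ) * P₀ x) →
      1 - β ≤ tvPMF P₀ Pb →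
      1 / 2 * ((Measure.pi fun _ : Fin N => P₁.toMeasure)
          {D | ¬ (γ * (1 - β) / 2 ≤ tvFin (fun x => (P₀ x).toReal) (empDist D))}).toReal +
      1 / 2 * ((Measure.pi fun _ : Fin N => P₀.toMeasure)
          {D | γ * (1 - β) / 2 ≤ tvFin (fun x => (P₀ x).toReal) (empDist D)}).toReal ≤ α := by
  intro P₀ Pb P₁ hmix htv
  set t := γ * (1 - β) / 2 with ht_def
  have ht : 0 ≤ t := div_nonneg (mul_nonneg hγ0.le (by linarith)) zero_le_two
  have hsep : 2 * t ≤ tvFin (fun x ↦ (P₀ x).toReal) (fun x ↦ (P₁ x).toReal) := by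
    rw [← tvPMF, tvPMF_eq_mul_of_mix hγ0.le hγ1 hmix, ht_def]
    linarith [mul_le_mul_of_nonneg_left htv hγ0.le]
  have hmiss : {D : Fin N → X | ¬ t ≤ tvFin (fun x ↦ (P₀ x).toReal) (empDist D)}
      ⊆ {D | t ≤ tvFin (fun x ↦ (P₁ x).toReal) (empDist D)} := fun D hD ↦ by
    have := tvFin_triangle (fun x ↦ (P₀ x).toReal) (empDist D) (fun x ↦ (P₁ x).toReal)
    rw [tvFin_comm (empDist D)] at this
    simp only [Set.mem_ofPred_eq, not_le] at hD ⊢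
    linarith
  have hbound :
      2 * Fintype.card X * Real.exp (-(8 * N * t ^ 2) / (Fintype.card X : ℝ) ^ 2) < α := by
    convert hα using 5
    ring
  have h₀ := measureReal_tvFin_empDist_ge_le N P₀ ht
  have h₁ := (measureReal_mono hmiss).trans (measureReal_tvFin_empDist_ge_le N P₁ ht)
  simp only [← measureReal_def]
  linarith

/-- Achievability: if α > 2|X| exp(-2Nγ²(1-β)²/|X|²), the type-based detector
g(D,P₀) = 1{TV(P₀, S_N) ≥ γ(1-β)/2} is α-error over all pairs with TV(P₀,P_b) ≥ 1-β. -/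
theorem stmt9 {X : Type*} [Fintype X] [DecidableEq X] [MeasurableSpace X]
    [MeasurableSingletonClass X]
    (N : ℕ) (hN : 0 < N) (γ β α : ℝ) (hγ0 : 0 < γ) (hγ1 : γ ≤ 1) (hβ0 : 0 ≤ β) (hβ1 : β < 1)
    (hα : 2 * Fintype.card X * Real.exp (-(2 * N * γ ^ 2 * (1 - β) ^ 2) / (Fintype.card X : ℝ) ^ 2)
        < α) :
    ∀ P₀ Pb P₁ : PMF X,
      (∀ x, P₁ x = ENNReal.ofReal γ * Pb x + ENNReal.ofReal (1 - γ) * P₀ x) →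
      1 - β ≤ tvPMF P₀ Pb →
      1 / 2 * ((Measure.pi fun _ : Fin N => P₁.toMeasure)
          {D | ¬ (γ * (1 - β) / 2 ≤ tvFin (fun x => (P₀ x).toReal) (empDist D))}).toReal +
      1 / 2 * ((Measure.pi fun _ : Fin N => P₀.toMeasure)
          {D | γ * (1 - β) / 2 ≤ tvFin (fun x => (P₀ x).toReal) (empDist D)}).toReal ≤ α :=
  stmt9_general N γ β α hγ0 hγ1 hβ1 hα
end

section
/- If |X| = ∞, γ ∈ (0,1] and N ∈ ℕ are fixed, and P = {(P₀, P_b) : P₀ ≠ P_b}, then any α-error Type-3 detector (Neyman–Pearson optimal, with access to P₀ and P_b) must have α = ½. -/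
/-!
Take `P₀ = δ_{x₀}` and `P_b = (1 - t) P₀ + t δ_{x₁}` with `t > 0` small. Then the mixture
`P₁ = γ P_b + (1 - γ) P₀` dominates `(1 - γ t) P₀`, so the law of `N` samples under `P₁` dominates
`(1 - γ t)^N` times the law under `P₀`. No test can separate two laws one of which dominates `c`
times the other with equal-prior risk below `c / 2`, so `α ≥ (1 - γ t)^N / 2` for every `t`, and
letting `t → 0` gives `α ≥ 1 / 2`.
-/

open MeasureTheory Set Filter Topology ENNReal

namespace MeasureTheory.Measure

variable {α : Type*} [MeasurableSpace α]

theorem le_of_forall_singleton_le [Countable α] [MeasurableSingletonClass α] {μ ν : Measure α}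
    (h : ∀ a, μ {a} ≤ ν {a}) : μ ≤ ν := by
  refine le_iff.mpr fun s hs => ?_
  rw [← tsum_indicator_apply_singleton μ s hs, ← tsum_indicator_apply_singleton ν s hs]
  exact ENNReal.tsum_le_tsum fun a => indicator_le_indicator (h a)

theorem prod_smul_pi_le_pi {ι : Type*} [Fintype ι] {α : ι → Type*} [∀ i, MeasurableSpace (α i)]
    [∀ i, Countable (α i)] [∀ i, MeasurableSingletonClass (α i)]
    {μ ν : ∀ i, Measure (α i)} [∀ i, SigmaFinite (μ i)] [∀ i, SigmaFinite (ν i)]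
    (c : ι → ℝ≥0∞) (h : ∀ i, c i • μ i ≤ ν i) : (∏ i, c i) • Measure.pi μ ≤ Measure.pi ν := by
  refine le_of_forall_singleton_le fun f => ?_
  rw [smul_apply, pi_singleton, pi_singleton, smul_eq_mul, ← Finset.prod_mul_distrib]
  exact Finset.prod_le_prod' fun i _ => h i {f i}

noncomputable def testRisk (ν₀ ν₁ : Measure α) (A : Set α) : ℝ :=
  1 / 2 * (ν₁ Aᶜ).toReal + 1 / 2 * (ν₀ A).toReal

theorem toReal_div_two_le_testRisk {ν₀ ν₁ : Measure α} [IsProbabilityMeasure ν₀]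
    [IsFiniteMeasure ν₁] {c : ℝ≥0∞} (hc : c ≤ 1) (h : c • ν₀ ≤ ν₁) (A : Set α) :
    c.toReal / 2 ≤ testRisk ν₀ ν₁ A := by
  have hcover : 1 ≤ ν₀.real A + ν₀.real Aᶜ := by
    simpa [union_compl_self] using measureReal_union_le (μ := ν₀) A Aᶜ
  have hcompl : c.toReal * ν₀.real Aᶜ ≤ (ν₁ Aᶜ).toReal := by
    rw [measureReal_def, ← toReal_mul]
    exact toReal_mono (measure_ne_top ν₁ _) (h Aᶜ)
  have hc' : c.toReal ≤ 1 := toReal_le_of_le_ofReal zero_le_one (by simpa using hc)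
  have hA : 0 ≤ ν₀.real A := measureReal_nonneg
  change _ ≤ 1 / 2 * _ + 1 / 2 * ν₀.real A
  nlinarith [toReal_nonneg (a := c)]

end MeasureTheory.Measure

namespace PMF

variable {α : Type*}

noncomputable def mix (p : ℝ) (hp₀ : 0 ≤ p) (hp₁ : p ≤ 1) (q r : PMF α) : PMF α :=
  ⟨fun x => ENNReal.ofReal p * q x + ENNReal.ofReal (1 - p) * r x, by
    rw [ENNReal.summable.hasSum_iff, ENNReal.tsum_add, ENNReal.tsum_mul_left,
      ENNReal.tsum_mul_left, q.tsum_coe, r.tsum_coe, mul_one, mul_one,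
      ← ENNReal.ofReal_add hp₀ (by linarith), add_sub_cancel, ENNReal.ofReal_one]⟩

theorem mix_apply (p : ℝ) (hp₀ : 0 ≤ p) (hp₁ : p ≤ 1) (q r : PMF α) (x : α) :
    mix p hp₀ hp₁ q r x = ENNReal.ofReal p * q x + ENNReal.ofReal (1 - p) * r x :=
  rfl

theorem mix_ne_pure {x₀ x₁ : α} (hne : x₀ ≠ x₁) {p : ℝ} (hp₀ : 0 < p) (hp₁ : p ≤ 1) :
    mix p hp₀.le hp₁ (pure x₁) (pure x₀) ≠ pure x₀ := by
  intro h
  exact hp₀.not_ge (by simpa [mix_apply, hne.symm] using congrArg (· x₁) h)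

theorem ofReal_one_sub_mul_le_mix_mix (p s : ℝ) (hp₀ : 0 ≤ p) (hp₁ : p ≤ 1) (hs₀ : 0 ≤ s)
    (hs₁ : s ≤ 1) (q r : PMF α) (x : α) :
    ENNReal.ofReal (1 - p * s) * r x ≤ mix p hp₀ hp₁ (mix s hs₀ hs₁ q r) r x := by
  have hsplit : ENNReal.ofReal (1 - p * s) =
      ENNReal.ofReal p * ENNReal.ofReal (1 - s) + ENNReal.ofReal (1 - p) := by
    rw [← ENNReal.ofReal_mul hp₀, ← ENNReal.ofReal_add (by nlinarith) (by linarith)]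
    ring_nf
  calc ENNReal.ofReal (1 - p * s) * r x
      = ENNReal.ofReal p * (ENNReal.ofReal (1 - s) * r x) + ENNReal.ofReal (1 - p) * r x := by
        rw [hsplit]; ring
    _ ≤ ENNReal.ofReal p * (ENNReal.ofReal s * q x + ENNReal.ofReal (1 - s) * r x)
          + ENNReal.ofReal (1 - p) * r x := by gcongr; exact le_add_self
    _ = _ := rfl

theorem smul_toMeasure_le [MeasurableSpace α] {p q : PMF α} {c : ℝ≥0∞}
    (h : ∀ x, c * p x ≤ q x) : c • p.toMeasure ≤ q.toMeasure := by
  refine Measure.le_iff.mpr fun s hs => ?_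
  rw [Measure.smul_apply, toMeasure_apply p hs, toMeasure_apply q hs, smul_eq_mul,
    ← ENNReal.tsum_mul_left]
  refine ENNReal.tsum_le_tsum fun x => ?_
  by_cases hx : x ∈ s <;> simp [hx, h x]

end PMF

theorem pow_div_two_le_testRisk_pi_prod {X Ω : Type*} [MeasurableSpace X] [Countable X]
    [MeasurableSingletonClass X] [MeasurableSpace Ω] (μΩ : Measure Ω) [IsProbabilityMeasure μΩ]
    (N : ℕ) {P₀ P₁ : PMF X} {c : ℝ} (hc₀ : 0 ≤ c) (hc₁ : c ≤ 1)
    (h : ∀ x, ENNReal.ofReal c * P₀ x ≤ P₁ x) (A : Set ((Fin N → X) × Ω)) :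
    c ^ N / 2 ≤ Measure.testRisk ((Measure.pi fun _ : Fin N => P₀.toMeasure).prod μΩ)
      ((Measure.pi fun _ : Fin N => P₁.toMeasure).prod μΩ) A := by
  have hle : ENNReal.ofReal (c ^ N) • (Measure.pi fun _ : Fin N => P₀.toMeasure).prod μΩ ≤
      (Measure.pi fun _ : Fin N => P₁.toMeasure).prod μΩ := by
    rw [← Measure.prod_smul_left, ENNReal.ofReal_pow hc₀, ← Fin.prod_const]
    exact Measure.prod_mono
      (Measure.prod_smul_pi_le_pi _ fun _ => PMF.smul_toMeasure_le h) le_rfl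
  simpa [ENNReal.toReal_ofReal (pow_nonneg hc₀ N)] using
    Measure.toReal_div_two_le_testRisk (ENNReal.ofReal_le_one.mpr (pow_le_one₀ hc₀ hc₁)) hle A

/-- Infinite-alphabet impossibility for Type-3 detectors: if the only restriction on the
pair of distributions is P₀ ≠ P_b, any α-error Type-3 detector (receiving the dataset,
P₀ and P_b, possibly randomized via Ω) must have α = ½. -/
theorem stmt15 {X Ω : Type*} [Countable X] [Infinite X]
    [MeasurableSpace X] [MeasurableSingletonClass X]
    [MeasurableSpace Ω] (μΩ : Measure Ω) [IsProbabilityMeasure μΩ]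
    (N : ℕ) (γ α : ℝ) (hγ0 : 0 < γ) (hγ1 : γ ≤ 1) (hα : α ≤ 1 / 2)
    (g : (Fin N → X) → PMF X → PMF X → Ω → Bool)
    (hdet : ∀ P₀ Pb P₁ : PMF X,
      (∀ x, P₁ x = ENNReal.ofReal γ * Pb x + ENNReal.ofReal (1 - γ) * P₀ x) →
      P₀ ≠ Pb →
      1 / 2 * (((Measure.pi fun _ : Fin N => P₁.toMeasure).prod μΩ)
          {q | g q.1 P₀ Pb q.2 = false}).toReal +
      1 / 2 * (((Measure.pi fun _ : Fin N => P₀.toMeasure).prod μΩ)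
          {q | g q.1 P₀ Pb q.2 = true}).toReal ≤ α) :
    α = 1 / 2 := by
  obtain ⟨x₀, x₁, hne⟩ := exists_pair_ne X
  have key : ∀ t ∈ Ioc (0 : ℝ) 1, (1 - γ * t) ^ N / 2 ≤ α := by
    rintro t ⟨ht₀, ht₁⟩
    set P₀ := PMF.pure x₀
    set Pb := PMF.mix t ht₀.le ht₁ (PMF.pure x₁) P₀
    have hγt : γ * t ≤ 1 := mul_le_one₀ hγ1 ht₀.le ht₁
    have hrisk := pow_div_two_le_testRisk_pi_prod μΩ N (sub_nonneg.mpr hγt)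
      (sub_le_self 1 (by positivity))
      (PMF.ofReal_one_sub_mul_le_mix_mix γ t hγ0.le hγ1 ht₀.le ht₁ (PMF.pure x₁) P₀)
      {q | g q.1 P₀ Pb q.2 = true}
    have hcompl : {q : (Fin N → X) × Ω | g q.1 P₀ Pb q.2 = true}ᶜ =
        {q | g q.1 P₀ Pb q.2 = false} := by
      ext; simp
    rw [Measure.testRisk, hcompl] at hrisk
    exact hrisk.trans (hdet P₀ Pb _ (fun _ => rfl) (PMF.mix_ne_pure hne ht₀ ht₁).symm)
  have hlim : Tendsto (fun t : ℝ => (1 - γ * t) ^ N / 2) (𝓝[>] 0) (𝓝 (1 / 2)) :=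
    tendsto_nhdsWithin_of_tendsto_nhds <|
      (by fun_prop : Continuous fun t : ℝ => (1 - γ * t) ^ N / 2).tendsto' 0 _ (by simp)
  linarith [le_of_tendsto hlim (eventually_of_mem (Ioc_mem_nhdsGT one_pos) key)]
end
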